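/- arXiv:1002.1127 — 3 statements merged into one kernel-verified Lean document; each statement's English description precedes it below -/
import Mathlib

section
/- Let $b>0$, $a\in L^\infty(\mathbb{R}^+)$ with $a\ge 0$ a.e., and define $B^*v = (\partial_x+b)v + (\partial_x+b)^3v - a(x)v$ on $D(B^*)=\{v\in H^3(\mathbb{R}^+): v(0)=v'(0)=0\}$. Then for every $v\in D(B^*)$, $(v,[B^*-(b^3+b)]v)_{L^2(\mathbb{R}^+)}\le 0$. -/
/-!
Expanding the cube, $v\,[B^* - (b^3+b)]v = v v' + v v''' + 3b\, v v'' + 3b^2 v v' - a v^2$.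
Integrating by parts on $(0, \infty)$, where every boundary term vanishes because
$v(0) = v'(0) = 0$ and $v, v', v'' \to 0$ at infinity, gives $\int v v' = \int v' v'' = 0$,
$\int v v''' = -\int v' v'' = 0$ and $\int v v'' = -\int v'^2$. Hence the quadratic form equals
$-3b \int v'^2 - \int a v^2 \le 0$.
-/

open MeasureTheory Set Filter Topology

lemma integral_Ioi_mul_deriv_eq_neg {u u' w w' : ℝ → ℝ} {a : ℝ}
    (hu : ∀ x ∈ Ici a, HasDerivAt u (u' x) x) (hw : ∀ x ∈ Ici a, HasDerivAt w (w' x) x)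
    (huw' : IntegrableOn (fun x => u x * w' x) (Ioi a))
    (hu'w : IntegrableOn (fun x => u' x * w x) (Ioi a))
    (h_zero : u a * w a = 0) (h_infty : Tendsto (fun x => u x * w x) atTop (𝓝 0)) :
    ∫ x in Ioi a, u x * w' x = -∫ x in Ioi a, u' x * w x := by
  have h_right : Tendsto (u * w) (𝓝[>] a) (𝓝 0) := by
    rw [← h_zero]
    exact ((hu a self_mem_Ici).continuousAt.mul
      (hw a self_mem_Ici).continuousAt).tendsto.mono_left nhdsWithin_le_nhds
  simpa using integral_Ioi_mul_deriv_eq_deriv_mul (fun x hx => hu x (Ioi_subset_Ici_self hx))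
    (fun x hx => hw x (Ioi_subset_Ici_self hx)) huw' hu'w h_right h_infty

lemma integral_Ioi_mul_deriv_self_eq_zero {u u' : ℝ → ℝ} {a : ℝ}
    (hu : ∀ x ∈ Ici a, HasDerivAt u (u' x) x) (huu' : IntegrableOn (fun x => u x * u' x) (Ioi a))
    (h_zero : u a = 0) (h_infty : Tendsto u atTop (𝓝 0)) :
    ∫ x in Ioi a, u x * u' x = 0 := by
  have h := integral_Ioi_mul_deriv_eq_neg hu hu huu' (by simpa only [mul_comm] using huu')
    (by simp [h_zero]) (by simpa using h_infty.mul h_infty)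
  simp only [mul_comm (u' _)] at h
  linarith

section CubicPart

variable {v v' v'' v''' : ℝ → ℝ}

-- `v' + v''' + 3 b v'' + 3 b² v'` is `[(∂ + b) + (∂ + b)³ - (b³ + b)] v`.
lemma integrableOn_mul_cubic (hv : MemLp v 2 (volume.restrict (Ioi 0)))
    (hv1 : MemLp v' 2 (volume.restrict (Ioi 0))) (hv2 : MemLp v'' 2 (volume.restrict (Ioi 0)))
    (hv3 : MemLp v''' 2 (volume.restrict (Ioi 0))) (b : ℝ) :
    IntegrableOn (fun x => v x * (v' x + v''' x + 3 * b * v'' x + 3 * b ^ 2 * v' x)) (Ioi 0) := by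
  have := ((hv.integrable_mul hv1).add (hv.integrable_mul hv3)).add
    (((hv.integrable_mul hv2).const_mul (3 * b)).add ((hv.integrable_mul hv1).const_mul (3 * b ^ 2)))
  refine this.congr (ae_of_all _ fun x => ?_)
  simp only [Pi.add_apply, Pi.mul_apply]
  ring

lemma integral_Ioi_mul_cubic (hv : MemLp v 2 (volume.restrict (Ioi 0)))
    (hv1 : MemLp v' 2 (volume.restrict (Ioi 0))) (hv2 : MemLp v'' 2 (volume.restrict (Ioi 0)))
    (hv3 : MemLp v''' 2 (volume.restrict (Ioi 0))) (b : ℝ)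
    (hd1 : ∀ x ∈ Ici 0, HasDerivAt v (v' x) x) (hd2 : ∀ x ∈ Ici 0, HasDerivAt v' (v'' x) x)
    (hd3 : ∀ x ∈ Ici 0, HasDerivAt v'' (v''' x) x) (hbc0 : v 0 = 0) (hbc1 : v' 0 = 0)
    (hlim : Tendsto v atTop (𝓝 0)) (hlim1 : Tendsto v' atTop (𝓝 0))
    (hlim2 : Tendsto v'' atTop (𝓝 0)) :
    ∫ x in Ioi 0, v x * (v' x + v''' x + 3 * b * v'' x + 3 * b ^ 2 * v' x)
      = -(3 * b) * ∫ x in Ioi 0, v' x ^ 2 := by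
  have i01 : IntegrableOn (fun x => v x * v' x) (Ioi 0) := hv.integrable_mul hv1
  have i02 : IntegrableOn (fun x => v x * v'' x) (Ioi 0) := hv.integrable_mul hv2
  have i03 : IntegrableOn (fun x => v x * v''' x) (Ioi 0) := hv.integrable_mul hv3
  have i12 : IntegrableOn (fun x => v' x * v'' x) (Ioi 0) := hv1.integrable_mul hv2
  have h01 : ∫ x in Ioi 0, v x * v' x = 0 :=
    integral_Ioi_mul_deriv_self_eq_zero hd1 i01 hbc0 hlim
  have h12 : ∫ x in Ioi 0, v' x * v'' x = 0 :=
    integral_Ioi_mul_deriv_self_eq_zero hd2 i12 hbc1 hlim1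
  have h02 : ∫ x in Ioi 0, v x * v'' x = -∫ x in Ioi 0, v' x ^ 2 := by
    simpa [sq] using integral_Ioi_mul_deriv_eq_neg hd1 hd2 i02 (hv1.integrable_mul hv1)
      (by simp [hbc0]) (by simpa using hlim.mul hlim1)
  have h03 : ∫ x in Ioi 0, v x * v''' x = -∫ x in Ioi 0, v' x * v'' x :=
    integral_Ioi_mul_deriv_eq_neg hd1 hd3 i03 i12 (by simp [hbc0]) (by simpa using hlim.mul hlim2)
  have i1 : IntegrableOn (fun x => (1 + 3 * b ^ 2) * (v x * v' x)) (Ioi 0) := i01.const_mul _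
  have i13 : IntegrableOn (fun x => (1 + 3 * b ^ 2) * (v x * v' x) + v x * v''' x) (Ioi 0) :=
    i1.add i03
  have i2 : IntegrableOn (fun x => 3 * b * (v x * v'' x)) (Ioi 0) := i02.const_mul _
  calc _ = ∫ x in Ioi 0, (1 + 3 * b ^ 2) * (v x * v' x) + v x * v''' x + 3 * b * (v x * v'' x) :=
        integral_congr_ae (ae_of_all _ fun x => by ring)
    _ = -(3 * b) * ∫ x in Ioi 0, v' x ^ 2 := by
      rw [integral_add i13 i2, integral_add i1 i03, integral_const_mul,
        integral_const_mul, h01, h02, h03, h12]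
      ring

end CubicPart

theorem stmt_5 (b : ℝ) (hb : 0 < b) (a : ℝ → ℝ)
    (ha_meas : Measurable a)
    (ha_bdd : ∃ M, ∀ᵐ x ∂(volume.restrict (Ioi (0:ℝ))), |a x| ≤ M)
    (ha_pos : ∀ᵐ x ∂(volume.restrict (Ioi (0:ℝ))), 0 ≤ a x)
    (v v' v'' v''' : ℝ → ℝ)
    (hd1 : ∀ x, HasDerivAt v (v' x) x)
    (hd2 : ∀ x, HasDerivAt v' (v'' x) x)
    (hd3 : ∀ x, HasDerivAt v'' (v''' x) x)
    (hbc0 : v 0 = 0) (hbc1 : v' 0 = 0)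
    (hv : IntegrableOn (fun x => (v x)^2) (Ioi 0))
    (hv1 : IntegrableOn (fun x => (v' x)^2) (Ioi 0))
    (hv2 : IntegrableOn (fun x => (v'' x)^2) (Ioi 0))
    (hv3 : IntegrableOn (fun x => (v''' x)^2) (Ioi 0))
    (hlim : Tendsto v atTop (nhds 0)) (hlim1 : Tendsto v' atTop (nhds 0))
    (hlim2 : Tendsto v'' atTop (nhds 0)) :
    (∫ x in Ioi (0:ℝ),
        v x * (((v' x + b * v x) + (v''' x + 3*b*v'' x + 3*b^2*v' x + b^3*v x) - a x * v x)
          - (b^3 + b) * v x)) ≤ 0 := by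
  have hm : ∀ {f f' : ℝ → ℝ}, (∀ x, HasDerivAt f (f' x) x) →
      AEStronglyMeasurable f (volume.restrict (Ioi 0)) := fun hf =>
    (continuous_iff_continuousAt.2 fun x => (hf x).continuousAt).aestronglyMeasurable
  have hm3 : AEStronglyMeasurable v''' (volume.restrict (Ioi 0)) := by
    rw [funext fun x => (hd3 x).deriv.symm]
    exact (measurable_deriv v'').aestronglyMeasurable
  have hL0 := (memLp_two_iff_integrable_sq (hm hd1)).2 hv
  have hL1 := (memLp_two_iff_integrable_sq (hm hd2)).2 hv1
  have hL2 := (memLp_two_iff_integrable_sq (hm hd3)).2 hv2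
  have hL3 := (memLp_two_iff_integrable_sq hm3).2 hv3
  obtain ⟨M, hM⟩ := ha_bdd
  have h_av : IntegrableOn (fun x => a x * v x ^ 2) (Ioi 0) :=
    hv.bdd_mul ha_meas.aestronglyMeasurable (by simpa only [Real.norm_eq_abs] using hM)
  have h_av_nonneg : 0 ≤ ∫ x in Ioi 0, a x * v x ^ 2 :=
    integral_nonneg_of_ae (by filter_upwards [ha_pos] with x hx using by positivity)
  have h_v'_nonneg : 0 ≤ ∫ x in Ioi 0, v' x ^ 2 := integral_nonneg fun x => sq_nonneg _
  calc _ = (∫ x in Ioi 0, v x * (v' x + v''' x + 3 * b * v'' x + 3 * b ^ 2 * v' x))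
        - ∫ x in Ioi 0, a x * v x ^ 2 := by
        rw [← integral_sub (integrableOn_mul_cubic hL0 hL1 hL2 hL3 b) h_av]
        exact integral_congr_ae (ae_of_all _ fun x => by ring)
    _ = -(3 * b) * (∫ x in Ioi 0, v' x ^ 2) - ∫ x in Ioi 0, a x * v x ^ 2 := by
        rw [integral_Ioi_mul_cubic hL0 hL1 hL2 hL3 b (fun x _ => hd1 x) (fun x _ => hd2 x)
          (fun x _ => hd3 x) hbc0 hbc1 hlim hlim1 hlim2]
    _ ≤ 0 := by nlinarith
end

section
/- Let $m\ge 1$ and $u\in H^1(\mathbb{R}^+)$ with $u(0)=0$ and $\int_0^\infty (x+1)^{m-1}u^2dx \le 1$. Then for every $\varepsilon>0$ there is $c_\varepsilon>0$ (independent of $u$) such that $\int_0^\infty (x+1)^{m-1}|u|^3dx \le \varepsilon\int_0^\infty (x+1)^{m-1}u_x^2dx + c_\varepsilon\big(\int_0^\infty u^2dx + \int_0^\infty (x+1)^{m-1}u^2dx\big)$. -/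
open MeasureTheory Set

/-!
Since `u 0 = 0`, the fundamental theorem of calculus gives `u b ^ 2 = ∫₀ᵇ 2 u' u`, and Young's
inequality `2 u' u ≤ ε u'² + ε⁻¹ u²` turns this into the uniform bound
`K := ε ‖u'‖₂² + ε⁻¹ ‖u‖₂² ≥ sup u²` (the Moser estimate combined with Young). Hence
`|u|³ ≤ (1 + K) u²` pointwise, and with `W = ∫ (x+1)^(m-1) u² ≤ 1` the weighted cubic integral
is at most `W + K W ≤ W + K`; the weight `(x+1)^(m-1) ≥ 1` absorbs `‖u'‖₂²`.
-/

lemma abs_pow_three_le_of_sq_le {x K : ℝ} (h : x ^ 2 ≤ K) : |x| ^ 3 ≤ (1 + K) * x ^ 2 := by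
  have habs : |x| ≤ 1 + K := by nlinarith [sq_abs x, sq_nonneg (|x| - 1)]
  calc |x| ^ 3 = |x| * x ^ 2 := by rw [← sq_abs x]; ring
    _ ≤ (1 + K) * x ^ 2 := mul_le_mul_of_nonneg_right habs (sq_nonneg x)

section Weighted

variable {α : Type*} [MeasurableSpace α] {μ : Measure α} {s : Set α}

lemma setIntegral_mul_abs_pow_three_le {w f : α → ℝ} {K : ℝ} (hs : MeasurableSet s)
    (hw : ∀ x ∈ s, 0 ≤ w x) (hf : ∀ x ∈ s, f x ^ 2 ≤ K)
    (h3 : IntegrableOn (fun x => w x * |f x| ^ 3) s μ)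
    (h2 : IntegrableOn (fun x => w x * f x ^ 2) s μ) :
    ∫ x in s, w x * |f x| ^ 3 ∂μ ≤ (1 + K) * ∫ x in s, w x * f x ^ 2 ∂μ := by
  rw [← integral_const_mul]
  refine setIntegral_mono_on h3 (h2.const_mul _) hs fun x hx => ?_
  calc w x * |f x| ^ 3 ≤ w x * ((1 + K) * f x ^ 2) :=
        mul_le_mul_of_nonneg_left (abs_pow_three_le_of_sq_le (hf x hx)) (hw x hx)
    _ = (1 + K) * (w x * f x ^ 2) := by ring

lemma setIntegral_le_setIntegral_mul_of_one_le {w g : α → ℝ} (hs : MeasurableSet s)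
    (hw : ∀ x ∈ s, 1 ≤ w x) (hg : ∀ x ∈ s, 0 ≤ g x) (hgi : IntegrableOn g s μ)
    (hwg : IntegrableOn (fun x => w x * g x) s μ) :
    ∫ x in s, g x ∂μ ≤ ∫ x in s, w x * g x ∂μ :=
  setIntegral_mono_on hgi hwg hs fun x hx => le_mul_of_one_le_left (hg x hx) (hw x hx)

end Weighted

section HalfLine

variable {u u' : ℝ → ℝ} {a : ℝ}

lemma integrableOn_deriv_mul_of_hasDerivAt_of_integrableOn_sq
    (hu : ∀ x ∈ Ici a, HasDerivAt u (u' x) x)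
    (hA : IntegrableOn (fun x => u x ^ 2) (Ioi a))
    (hB : IntegrableOn (fun x => u' x ^ 2) (Ioi a)) :
    IntegrableOn (fun x => u' x * u x) (Ioi a) := by
  have hum : AEStronglyMeasurable u (volume.restrict (Ioi a)) :=
    ContinuousOn.aestronglyMeasurable (fun x hx =>
      (hu x (Ioi_subset_Ici_self hx)).continuousAt.continuousWithinAt) measurableSet_Ioi
  have hu'm : AEStronglyMeasurable u' (volume.restrict (Ioi a)) := by
    refine (measurable_deriv u).aestronglyMeasurable.congr ?_
    exact (ae_restrict_iff' measurableSet_Ioi).2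
      (ae_of_all _ fun x hx => (hu x (Ioi_subset_Ici_self hx)).deriv)
  exact ((memLp_two_iff_integrable_sq hu'm).2 hB).integrable_mul
    ((memLp_two_iff_integrable_sq hum).2 hA)

theorem sq_le_of_hasDerivAt_of_integrableOn_sq (hu0 : u a = 0)
    (hu : ∀ x ∈ Ici a, HasDerivAt u (u' x) x)
    (hA : IntegrableOn (fun x => u x ^ 2) (Ioi a))
    (hB : IntegrableOn (fun x => u' x ^ 2) (Ioi a)) {δ : ℝ} (hδ : 0 < δ) {b : ℝ} (hb : a ≤ b) :
    u b ^ 2 ≤ δ * (∫ x in Ioi a, u' x ^ 2) + δ⁻¹ * ∫ x in Ioi a, u x ^ 2 := by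
  have hprod : IntegrableOn (fun t => 2 * u' t * u t) (Ioi a) := by
    simp only [mul_assoc]
    exact (integrableOn_deriv_mul_of_hasDerivAt_of_integrableOn_sq hu hA hB).const_mul 2
  have hbound : IntegrableOn (fun t => δ * u' t ^ 2 + δ⁻¹ * u t ^ 2) (Ioi a) :=
    (hB.const_mul δ).add (hA.const_mul δ⁻¹)
  have hftc : ∫ t in a..b, 2 * u' t * u t = u b ^ 2 - u a ^ 2 := by
    refine intervalIntegral.integral_eq_sub_of_hasDerivAt (f := fun t => u t ^ 2)
      (fun t ht => ?_)
      ((intervalIntegrable_iff_integrableOn_Ioc_of_le hb).2 (hprod.mono_set Ioc_subset_Ioi_self))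
    rw [uIcc_of_le hb] at ht
    exact ((hu t ht.1).pow 2).congr_deriv (by ring)
  calc u b ^ 2 = ∫ t in Ioc a b, 2 * u' t * u t := by
        rw [← intervalIntegral.integral_of_le hb, hftc, hu0]; ring
    _ ≤ ∫ t in Ioc a b, (δ * u' t ^ 2 + δ⁻¹ * u t ^ 2) :=
        setIntegral_mono_on (hprod.mono_set Ioc_subset_Ioi_self)
          (hbound.mono_set Ioc_subset_Ioi_self) measurableSet_Ioc
          fun t _ => two_mul_le_add_mul_sq hδ
    _ ≤ ∫ t in Ioi a, (δ * u' t ^ 2 + δ⁻¹ * u t ^ 2) :=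
        setIntegral_mono_set hbound (ae_of_all _ fun t => by positivity)
          (ae_of_all _ Ioc_subset_Ioi_self)
    _ = δ * (∫ x in Ioi a, u' x ^ 2) + δ⁻¹ * ∫ x in Ioi a, u x ^ 2 := by
        rw [integral_add (hB.const_mul _) (hA.const_mul _), integral_const_mul,
          integral_const_mul]

end HalfLine

theorem stmt_12_general (m : ℕ) : ∀ ε > (0:ℝ), ∃ c > (0:ℝ), ∀ u u' : ℝ → ℝ,
    u 0 = 0 → (∀ x ∈ Ici (0:ℝ), HasDerivAt u (u' x) x) →
    IntegrableOn (fun x => (u x)^2) (Ioi 0) →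
    IntegrableOn (fun x => (u' x)^2) (Ioi 0) →
    IntegrableOn (fun x => (x+1)^(m-1) * (u x)^2) (Ioi 0) →
    IntegrableOn (fun x => (x+1)^(m-1) * (u' x)^2) (Ioi 0) →
    IntegrableOn (fun x => (x+1)^(m-1) * |u x|^3) (Ioi 0) →
    (∫ x in Ioi (0:ℝ), (x+1)^(m-1) * (u x)^2) ≤ 1 →
    (∫ x in Ioi (0:ℝ), (x+1)^(m-1) * |u x|^3) ≤
      ε * (∫ x in Ioi (0:ℝ), (x+1)^(m-1) * (u' x)^2)
        + c * ((∫ x in Ioi (0:ℝ), (u x)^2)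
          + (∫ x in Ioi (0:ℝ), (x+1)^(m-1) * (u x)^2)) := by
  intro ε hε
  refine ⟨1 + ε⁻¹, by positivity, fun u u' hu0 hu hA hB hW hW' h3 hW1 => ?_⟩
  have hcube := setIntegral_mul_abs_pow_three_le measurableSet_Ioi
    (fun x (hx : 0 < x) => by positivity)
    (fun x hx => sq_le_of_hasDerivAt_of_integrableOn_sq hu0 hu hA hB hε (le_of_lt hx)) h3 hW
  have hderiv_le := setIntegral_le_setIntegral_mul_of_one_le measurableSet_Ioi
    (fun x (hx : 0 < x) => one_le_pow₀ (by linarith : (1:ℝ) ≤ x + 1))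
    (fun x _ => sq_nonneg (u' x)) hB hW'
  have hA0 : 0 ≤ ∫ x in Ioi (0:ℝ), u x ^ 2 := integral_nonneg fun x => sq_nonneg _
  have hB0 : 0 ≤ ∫ x in Ioi (0:ℝ), u' x ^ 2 := integral_nonneg fun x => sq_nonneg _
  have hW0 : 0 ≤ ∫ x in Ioi (0:ℝ), (x+1)^(m-1) * u x ^ 2 :=
    setIntegral_nonneg measurableSet_Ioi fun x (hx : 0 < x) => by positivity
  generalize ∫ x in Ioi (0:ℝ), u x ^ 2 = A at *
  generalize ∫ x in Ioi (0:ℝ), u' x ^ 2 = B at *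
  generalize ∫ x in Ioi (0:ℝ), (x+1)^(m-1) * u x ^ 2 = W at *
  have hK0 : 0 ≤ ε * B + ε⁻¹ * A := by positivity
  linarith [mul_le_of_le_one_right hK0 hW1, mul_le_mul_of_nonneg_left hderiv_le hε.le,
    mul_nonneg (inv_nonneg.2 hε.le) hW0]

theorem stmt_12 (m : ℕ) (hm : 1 ≤ m) : ∀ ε > (0:ℝ), ∃ c > (0:ℝ), ∀ u u' : ℝ → ℝ,
    u 0 = 0 → (∀ x ∈ Ici (0:ℝ), HasDerivAt u (u' x) x) →
    IntegrableOn (fun x => (u x)^2) (Ioi 0) →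
    IntegrableOn (fun x => (u' x)^2) (Ioi 0) →
    IntegrableOn (fun x => (x+1)^(m-1) * (u x)^2) (Ioi 0) →
    IntegrableOn (fun x => (x+1)^(m-1) * (u' x)^2) (Ioi 0) →
    IntegrableOn (fun x => (x+1)^(m-1) * |u x|^3) (Ioi 0) →
    (∫ x in Ioi (0:ℝ), (x+1)^(m-1) * (u x)^2) ≤ 1 →
    (∫ x in Ioi (0:ℝ), (x+1)^(m-1) * |u x|^3) ≤
      ε * (∫ x in Ioi (0:ℝ), (x+1)^(m-1) * (u' x)^2)
        + c * ((∫ x in Ioi (0:ℝ), (u x)^2)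
          + (∫ x in Ioi (0:ℝ), (x+1)^(m-1) * (u x)^2)) :=
  stmt_12_general m
end

section
/- Let $b>0$ and let $u\in H^1_b$ with $\|u\|_{L^2(\mathbb{R}^+)}\le R$. Then for every $\delta>0$ there exists a constant $C_\delta = C(b,\delta,R)>0$ such that $\int_0^\infty |u|^3 e^{2bx}\,dx \le \delta\int_0^\infty u_x^2 e^{2bx}dx + C_\delta\int_0^\infty u^2 e^{2bx}dx$. -/
open MeasureTheory Set Filter

/-!
Since `u 0 = 0`, the function `u² e^{2bx}` is the integral over `(0, x)` of its derivative
`(2uu' + 2bu²) e^{2bt}`, and `2|uu'| ≤ εu'² + ε⁻¹u²` turns this into the weighted sup bound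
`u(x)² e^{2bx} ≤ K := ε ∫ u'² e^{2bt} + (ε⁻¹ + 2b) ∫ u² e^{2bt}`.
Writing `|u|³ e^{2bx} = |u| · u² e^{2bx}` and using `2|u| ≤ c + c⁻¹u²` gives pointwise
`|u|³ e^{2bx} ≤ (c u² e^{2bx} + c⁻¹ K u²) / 2`; integrate with `c = R²`, use `∫ u² ≤ R²`,
and take `ε = 2δ`.
-/

theorem norm_le_integral_of_hasDerivAt_of_norm_le {E : Type*} [NormedAddCommGroup E]
    [NormedSpace ℝ E] [CompleteSpace E] {f f' : ℝ → E} {g : ℝ → ℝ} (h0 : f 0 = 0)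
    (hf : ∀ x ∈ Ici (0:ℝ), HasDerivAt f (f' x) x) (hg : IntegrableOn g (Ioi 0))
    (hf'g : ∀ x ∈ Ioi (0:ℝ), ‖f' x‖ ≤ g x) {x : ℝ} (hx : 0 ≤ x) :
    ‖f x‖ ≤ ∫ t in Ioi 0, g t := by
  have hf'_meas : AEStronglyMeasurable f' (volume.restrict (Ioi 0)) :=
    (aestronglyMeasurable_deriv f _).congr <| ae_restrict_of_forall_mem measurableSet_Ioi
      fun t ht => (hf t (mem_Ioi.mp ht).le).deriv
  have hf'_int : IntegrableOn f' (Ioi 0) :=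
    hg.mono' hf'_meas (ae_restrict_of_forall_mem measurableSet_Ioi hf'g)
  have hIoc : Ioc 0 x ⊆ Ioi 0 := Ioc_subset_Ioi_self
  have hftc : f x = ∫ t in (0:ℝ)..x, f' t := by
    rw [intervalIntegral.integral_eq_sub_of_hasDerivAt
      (fun t ht => hf t (by rw [uIcc_of_le hx] at ht; exact ht.1))
      ((intervalIntegrable_iff_integrableOn_Ioc_of_le hx).mpr (hf'_int.mono_set hIoc)),
      h0, sub_zero]
  calc ‖f x‖ ≤ ∫ t in (0:ℝ)..x, g t := by
        rw [hftc]
        exact intervalIntegral.norm_integral_le_of_norm_le hx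
          (ae_of_all _ fun t ht => hf'g t (hIoc ht))
          ((intervalIntegrable_iff_integrableOn_Ioc_of_le hx).mpr (hg.mono_set hIoc))
    _ ≤ ∫ t in Ioi 0, g t := by
        rw [intervalIntegral.integral_of_le hx]
        exact setIntegral_mono_set hg
          (ae_restrict_of_forall_mem measurableSet_Ioi fun t ht =>
            (norm_nonneg _).trans (hf'g t ht))
          hIoc.eventuallyLE

theorem abs_two_mul_mul_add_le {b ε p q : ℝ} (hb : 0 ≤ b) (hε : 0 < ε) :
    |2 * p * q + 2 * b * p ^ 2| ≤ ε * q ^ 2 + (ε⁻¹ + 2 * b) * p ^ 2 := by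
  have hamgm := two_mul_le_add_mul_sq (a := |q|) (b := |p|) hε
  rw [sq_abs, sq_abs] at hamgm
  calc |2 * p * q + 2 * b * p ^ 2| ≤ 2 * |q| * |p| + 2 * b * p ^ 2 := by
        refine (abs_add_le _ _).trans_eq ?_
        rw [abs_of_nonneg (by positivity : 0 ≤ 2 * b * p ^ 2), abs_mul, abs_mul, abs_two]
        ring
    _ ≤ _ := by linarith

theorem hasDerivAt_sq_mul_exp {b x y : ℝ} {u : ℝ → ℝ} (hu : HasDerivAt u y x) :
    HasDerivAt (fun t => u t ^ 2 * Real.exp (2 * b * t))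
      ((2 * u x * y + 2 * b * u x ^ 2) * Real.exp (2 * b * x)) x := by
  have hsq : HasDerivAt (fun t => u t ^ 2) (↑2 * u x ^ (2 - 1) * y) x := hu.pow 2
  have hexp : HasDerivAt (fun t => Real.exp (2 * b * t)) (Real.exp (2 * b * x) * (2 * b)) x := by
    simpa using ((hasDerivAt_id x).const_mul (2 * b)).exp
  refine (hsq.mul hexp).congr_deriv ?_
  push_cast
  ring

theorem sq_mul_exp_le_of_hasDerivAt {b ε : ℝ} {u u' : ℝ → ℝ} (hb : 0 ≤ b) (hε : 0 < ε)
    (hu0 : u 0 = 0) (hu : ∀ x ∈ Ici (0:ℝ), HasDerivAt u (u' x) x)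
    (hu_int : IntegrableOn (fun x => u x ^ 2 * Real.exp (2 * b * x)) (Ioi 0))
    (hu'_int : IntegrableOn (fun x => u' x ^ 2 * Real.exp (2 * b * x)) (Ioi 0))
    {x : ℝ} (hx : 0 ≤ x) :
    u x ^ 2 * Real.exp (2 * b * x) ≤
      ε * (∫ t in Ioi 0, u' t ^ 2 * Real.exp (2 * b * t))
        + (ε⁻¹ + 2 * b) * ∫ t in Ioi 0, u t ^ 2 * Real.exp (2 * b * t) := by
  have hg : IntegrableOn (fun t => ε * (u' t ^ 2 * Real.exp (2 * b * t))
      + (ε⁻¹ + 2 * b) * (u t ^ 2 * Real.exp (2 * b * t))) (Ioi 0) :=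
    (hu'_int.const_mul ε).add (hu_int.const_mul _)
  have hbound := norm_le_integral_of_hasDerivAt_of_norm_le (by simp [hu0])
    (fun t ht => hasDerivAt_sq_mul_exp (b := b) (hu t ht)) hg
    (fun t _ => by
      rw [Real.norm_eq_abs, abs_mul, Real.abs_exp]
      exact (mul_le_mul_of_nonneg_right (abs_two_mul_mul_add_le hb hε)
        (Real.exp_pos _).le).trans_eq (by ring))
    hx
  rwa [integral_add (hu'_int.const_mul ε) (hu_int.const_mul _), integral_const_mul,
    integral_const_mul, Real.norm_of_nonneg (by positivity)] at hbound

theorem abs_pow_three_mul_le {p w K c : ℝ} (hw : 0 ≤ w) (hc : 0 < c) (hK : p ^ 2 * w ≤ K) :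
    |p| ^ 3 * w ≤ (c * (p ^ 2 * w) + c⁻¹ * K * p ^ 2) / 2 := by
  have hamgm := two_mul_le_add_mul_sq (a := 1) (b := |p|) hc
  rw [sq_abs, one_pow, mul_one, mul_one] at hamgm
  calc |p| ^ 3 * w = |p| * (p ^ 2 * w) := by rw [pow_succ', sq_abs]; ring
    _ ≤ (c + c⁻¹ * p ^ 2) / 2 * (p ^ 2 * w) := by gcongr; linarith
    _ ≤ _ := by nlinarith [mul_le_mul_of_nonneg_left hK (by positivity : 0 ≤ c⁻¹ * p ^ 2)]

theorem integral_abs_pow_three_mul_le {α : Type*} [MeasurableSpace α] {μ : Measure α}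
    {u w : α → ℝ} {K c : ℝ} (hc : 0 < c) (hw : ∀ᵐ x ∂μ, 0 ≤ w x)
    (hK : ∀ᵐ x ∂μ, u x ^ 2 * w x ≤ K) (hu3 : Integrable (fun x => |u x| ^ 3 * w x) μ)
    (hu2w : Integrable (fun x => u x ^ 2 * w x) μ) (hu2 : Integrable (fun x => u x ^ 2) μ) :
    ∫ x, |u x| ^ 3 * w x ∂μ ≤ (c * ∫ x, u x ^ 2 * w x ∂μ + c⁻¹ * K * ∫ x, u x ^ 2 ∂μ) / 2 := by
  calc ∫ x, |u x| ^ 3 * w x ∂μ ≤ ∫ x, (c * (u x ^ 2 * w x) + c⁻¹ * K * u x ^ 2) / 2 ∂μ :=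
        integral_mono_ae hu3 (((hu2w.const_mul c).add (hu2.const_mul _)).div_const 2) <| by
          filter_upwards [hw, hK] with x hwx hKx using abs_pow_three_mul_le hwx hc hKx
    _ = _ := by
        rw [integral_div, integral_add (hu2w.const_mul c) (hu2.const_mul _), integral_const_mul,
          integral_const_mul]

theorem integrableOn_sq_of_integrableOn_sq_mul_exp {b : ℝ} {u : ℝ → ℝ} (hb : 0 ≤ b)
    (hu : ContinuousOn u (Ioi 0))
    (h : IntegrableOn (fun x => u x ^ 2 * Real.exp (2 * b * x)) (Ioi 0)) :
    IntegrableOn (fun x => u x ^ 2) (Ioi 0) :=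
  h.mono' ((hu.pow 2).aestronglyMeasurable measurableSet_Ioi) <|
    ae_restrict_of_forall_mem measurableSet_Ioi fun x hx => by
      rw [Real.norm_of_nonneg (sq_nonneg _)]
      exact le_mul_of_one_le_right (sq_nonneg _)
        (Real.one_le_exp (mul_nonneg (by positivity) (mem_Ioi.mp hx).le))

theorem stmt_19 (b R : ℝ) (hb : 0 < b) (hR : 0 < R) :
    ∀ δ > (0:ℝ), ∃ C > (0:ℝ), ∀ u u' : ℝ → ℝ,
      u 0 = 0 → (∀ x ∈ Ici (0:ℝ), HasDerivAt u (u' x) x) →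
      IntegrableOn (fun x => (u x)^2 * Real.exp (2*b*x)) (Ioi 0) →
      IntegrableOn (fun x => (u' x)^2 * Real.exp (2*b*x)) (Ioi 0) →
      IntegrableOn (fun x => |u x|^3 * Real.exp (2*b*x)) (Ioi 0) →
      Real.sqrt (∫ x in Ioi (0:ℝ), (u x)^2) ≤ R →
      (∫ x in Ioi (0:ℝ), |u x|^3 * Real.exp (2*b*x)) ≤
        δ * (∫ x in Ioi (0:ℝ), (u' x)^2 * Real.exp (2*b*x))
          + C * (∫ x in Ioi (0:ℝ), (u x)^2 * Real.exp (2*b*x)) := by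
  intro δ hδ
  refine ⟨(R ^ 2 + (2 * δ)⁻¹ + 2 * b) / 2, by positivity, ?_⟩
  intro u u' hu0 hu hu_int hu'_int hu3_int hL2
  have hu2_int : IntegrableOn (fun x => u x ^ 2) (Ioi 0) :=
    integrableOn_sq_of_integrableOn_sq_mul_exp hb.le
      (fun x hx => (hu x (mem_Ioi.mp hx).le).continuousAt.continuousWithinAt) hu_int
  set IA := ∫ x in Ioi (0:ℝ), u' x ^ 2 * Real.exp (2 * b * x)
  set IB := ∫ x in Ioi (0:ℝ), u x ^ 2 * Real.exp (2 * b * x)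
  set K := 2 * δ * IA + ((2 * δ)⁻¹ + 2 * b) * IB
  have hsup : ∀ x ∈ Ioi (0:ℝ), u x ^ 2 * Real.exp (2 * b * x) ≤ K := fun x hx =>
    sq_mul_exp_le_of_hasDerivAt hb.le (by positivity) hu0 hu hu_int hu'_int (mem_Ioi.mp hx).le
  have hK : 0 ≤ K := add_nonneg
    (mul_nonneg (by positivity) (integral_nonneg fun x => by positivity))
    (mul_nonneg (by positivity) (integral_nonneg fun x => by positivity))
  have hcubic := integral_abs_pow_three_mul_le (μ := volume.restrict (Ioi 0)) (c := R ^ 2)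
    (by positivity) (ae_of_all _ fun x => (Real.exp_pos _).le)
    (ae_restrict_of_forall_mem measurableSet_Ioi hsup) hu3_int hu_int hu2_int
  have hR2 : (R ^ 2)⁻¹ * K * ∫ x in Ioi (0:ℝ), u x ^ 2 ≤ K := by
    rw [mul_comm _ K, mul_assoc]
    refine mul_le_of_le_one_right hK ?_
    rw [inv_mul_le_iff₀ (by positivity), mul_one]
    exact (Real.sqrt_le_left hR.le).mp hL2
  calc ∫ x in Ioi (0:ℝ), |u x| ^ 3 * Real.exp (2 * b * x)
      ≤ (R ^ 2 * IB + (R ^ 2)⁻¹ * K * ∫ x in Ioi (0:ℝ), u x ^ 2) / 2 := hcubic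
    _ ≤ (R ^ 2 * IB + K) / 2 := by gcongr
    _ = _ := by ring
end
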